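/- arXiv:1301.5724 — 2 statements merged into one kernel-verified Lean document; each statement's English description precedes it below -/
import Mathlib

section
/- Let f : X × Y → A and f' : X' × Y' → A be measurable functions, and suppose T : X → X', S : Y → Y' are measure-preserving invertible maps with f'(Tx, Sy) = f(x,y) a.e. Then for every n and μ^n-a.e. (x_1,…,x_n) ∈ X^n, the joint distribution of (f(x_1,·),…,f(x_n,·)) under ν equals the joint distribution of (f'(Tx_1,·),…,f'(Tx_n,·)) under ν'; i.e., the map T^n : X^n → (X')^n intertwines the systems of joint distributions of f and f'. -/
open MeasureTheory

/-- **invariance of the SJD.** If `f'(Tx, Sy) = f(x,y)` a.e. for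
measure-preserving invertible `T, S`, then `T^n` intertwines the systems of joint
distributions: for `μ^n`-a.e. `(x_1,…,x_n)`, the law of `y ↦ (f(x_i,y))_i` under `ν`
equals the law of `y' ↦ (f'(Tx_i,y'))_i` under `ν'`. -/
theorem SJD_invariant_under_equivalence
    {X Y X' Y' A : Type*} [MeasurableSpace X] [StandardBorelSpace X]
    [MeasurableSpace Y] [StandardBorelSpace Y]
    [MeasurableSpace X'] [StandardBorelSpace X']
    [MeasurableSpace Y'] [StandardBorelSpace Y']
    [MeasurableSpace A] [StandardBorelSpace A]
    (μ : Measure X) (ν : Measure Y) (μ' : Measure X') (ν' : Measure Y')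
    [IsProbabilityMeasure μ] [IsProbabilityMeasure ν]
    [IsProbabilityMeasure μ'] [IsProbabilityMeasure ν']
    (f : X × Y → A) (f' : X' × Y' → A) (hf : Measurable f) (hf' : Measurable f')
    (T : X ≃ᵐ X') (S : Y ≃ᵐ Y')
    (hT : MeasurePreserving T μ μ') (hS : MeasurePreserving S ν ν')
    (heq : ∀ᵐ p ∂(μ.prod ν), f' (T p.1, S p.2) = f p) :
    ∀ n : ℕ, ∀ᵐ x ∂(Measure.pi fun _ : Fin n => μ),
      Measure.map (fun y => fun i : Fin n => f (x i, y)) ν =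
        Measure.map (fun y' => fun i : Fin n => f' (T (x i), y')) ν' := by
  intro n
  have hsig : SigmaFinite ν := inferInstance
  have h1 : ∀ᵐ x ∂μ, ∀ᵐ y ∂ν, f' (T x, S y) = f (x, y) :=
    Measure.ae_ae_of_ae_prod heq
  have h2 : ∀ᵐ x ∂(Measure.pi fun _ : Fin n => μ),
      ∀ i, ∀ᵐ y ∂ν, f' (T (x i), S y) = f (x i, y) := by
    rw [ae_all_iff]
    intro i
    rw [ae_iff] at h1 ⊢
    exact Measure.pi_eval_preimage_null (μ := fun _ : Fin n => μ) (i := i) h1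
  filter_upwards [h2] with x hx
  have hae : ∀ᵐ y ∂ν, (fun i : Fin n => f (x i, y)) =
      fun i : Fin n => f' (T (x i), S y) := by
    filter_upwards [ae_all_iff.mpr hx] with y hy
    funext i
    exact (hy i).symm
  have hg : Measurable (fun y' : Y' => fun i : Fin n => f' (T (x i), y')) :=
    measurable_pi_lambda _ fun i => hf'.comp (measurable_const.prodMk measurable_id)
  calc Measure.map (fun y => fun i : Fin n => f (x i, y)) ν
      = Measure.map (fun y => fun i : Fin n => f' (T (x i), S y)) ν :=
        Measure.map_congr hae
    _ = Measure.map ((fun y' => fun i : Fin n => f' (T (x i), y')) ∘ S) ν := rfl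
    _ = Measure.map (fun y' => fun i : Fin n => f' (T (x i), y')) (Measure.map S ν) :=
        (Measure.map_map hg S.measurable).symm
    _ = Measure.map (fun y' => fun i : Fin n => f' (T (x i), y')) ν' := by
        rw [hS.map_eq]
end

section
/- Let D be a Borel probability measure on M_∞(A) invariant and ergodic under the S_∞ × S_∞ action by row and column permutations. Then for D-almost every matrix R = (r_{ij}), for every cylinder set B ⊂ A^∞ from a fixed countable generating algebra, the limit m_R(B) = lim_{n→∞} (1/n!) Σ_{g ∈ S_n} χ_B((r_{i, g⁻¹(1)})_{i≥1}) exists, and m_R extends to a Borel probability measure on A^ℕ. -/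
/-
Column-permutation invariance of `D` makes the columns of `R` an exchangeable sequence. For a
cylinder `B`, the indicators `ξ_c = χ_B(column c)` therefore have `E[ξ_c ξ_d]` depending only on
whether `c = d`, so the Cesàro means `S_n` of `ξ_0, …, ξ_n` satisfy `E (S_N - S_M)² ≤ 1 / (N + 1)`
for `N ≤ M`. This `L²` rate forces almost sure convergence: along `n = 4 ^ j` the increments are
almost surely summable, which produces a limit `S`; then `E (S_N - S)² ≤ 1 / (N + 1)` and
Borel–Cantelli give convergence along the squares, and between consecutive squares `S_n` moves by
`O(1 / √n)`. The limit is invariant under finite permutations of the columns and has the same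
integral as `ξ_0` over every such invariant set, so it is the conditional expectation of `ξ_0`
given the exchangeable σ-algebra, i.e. the mass of the cylinder under the conditional law of the
first column given that σ-algebra; this conditional law is `m_R`. Averaging over `g ∈ S_{n+1}` the
entry of column `g⁻¹ 0` is just the Cesàro mean of the first `n + 1` columns.
-/

open MeasureTheory ProbabilityTheory Filter Finset Topology
open scoped symmDiff Classical

noncomputable def cesaroMean (u : ℕ → ℝ) (n : ℕ) : ℝ := ((n : ℝ) + 1)⁻¹ * ∑ c ∈ range (n + 1), u c

noncomputable def cesaroLimit (u : ℕ → ℝ) : ℝ := limUnder atTop (cesaroMean u)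

section CesaroMean

variable {u : ℕ → ℝ}

lemma cesaroMean_mem_unitInterval (hu : ∀ c, u c ∈ unitInterval) (n : ℕ) :
    cesaroMean u n ∈ unitInterval := by
  have hsum : ∑ c ∈ range (n + 1), u c ∈ Set.Icc 0 ((n : ℝ) + 1) := by
    refine ⟨sum_nonneg fun c _ => (hu c).1, ?_⟩
    simpa using sum_le_card_nsmul (range (n + 1)) u 1 fun c _ => (hu c).2
  rw [cesaroMean, Set.mem_Icc, ← div_eq_inv_mul, div_le_one (by positivity)]
  exact ⟨by have := hsum.1; positivity, hsum.2⟩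

lemma abs_cesaroMean_sub_le (hu : ∀ c, u c ∈ unitInterval) {m n : ℕ} (h : m ≤ n) :
    |cesaroMean u n - cesaroMean u m| ≤ (n - m) / (n + 1) := by
  -- `(n+1) cesaroMean u n - (m+1) cesaroMean u m` is a sum of `n - m` terms in `[0, 1]`
  have htail : ∑ c ∈ Ico (m + 1) (n + 1), u c ∈ Set.Icc 0 ((n : ℝ) - m) := by
    refine ⟨sum_nonneg fun c _ => (hu c).1, ?_⟩
    have := sum_le_card_nsmul (Ico (m + 1) (n + 1)) u 1 fun c _ => (hu c).2
    simpa [Nat.cast_sub h] using this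
  have hsplit : ∑ c ∈ range (n + 1), u c =
      ∑ c ∈ range (m + 1), u c + ∑ c ∈ Ico (m + 1) (n + 1), u c :=
    (sum_range_add_sum_Ico u (by omega)).symm
  have hm := cesaroMean_mem_unitInterval hu m
  have hmn : (m : ℝ) ≤ n := by exact_mod_cast h
  have key : cesaroMean u n - cesaroMean u m
      = (∑ c ∈ Ico (m + 1) (n + 1), u c - (n - m) * cesaroMean u m) / (n + 1) := by
    rw [cesaroMean, cesaroMean, hsplit]; field_simp; ring
  rw [key, abs_div, abs_of_pos (by positivity : (0 : ℝ) < n + 1)]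
  gcongr
  rw [abs_le]; constructor <;> nlinarith [htail.1, htail.2, hm.1, hm.2]

lemma cesaroMean_comp_swap {a b n : ℕ} (ha : a ≤ n) (hb : b ≤ n) :
    cesaroMean (u ∘ Equiv.swap a b) n = cesaroMean u n := by
  rw [cesaroMean, cesaroMean, Function.comp_def,
    Equiv.Perm.sum_comp (Equiv.swap a b) (range (n + 1)) u]
  intro x hx
  by_contra hxn
  simp only [coe_range, Set.mem_Iio, not_lt] at hxn
  exact hx (Equiv.swap_apply_of_ne_of_ne (by omega) (by omega))

lemma tendsto_cesaroMean_of_tendsto_sq (hu : ∀ c, u c ∈ unitInterval) {l : ℝ}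
    (h : Tendsto (fun K => cesaroMean u (K ^ 2)) atTop (𝓝 l)) :
    Tendsto (cesaroMean u) atTop (𝓝 l) := by
  have hsqrt : Tendsto Nat.sqrt atTop atTop :=
    tendsto_atTop_atTop.2 fun b => ⟨b * b, fun n hn => Nat.le_sqrt.2 hn⟩
  have hclose : ∀ n, |cesaroMean u n - cesaroMean u (n.sqrt ^ 2)| ≤ 2 / (n.sqrt + 1) := by
    intro n
    set s := n.sqrt
    have hs : s ^ 2 ≤ n := Nat.sqrt_le' n
    have hn : n < (s + 1) ^ 2 := Nat.lt_succ_sqrt' n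
    refine (abs_cesaroMean_sub_le hu hs).trans ?_
    have hs' : ((s ^ 2 : ℕ) : ℝ) ≤ n := by exact_mod_cast hs
    have hn' : (n : ℝ) + 1 ≤ (s + 1) ^ 2 := by exact_mod_cast hn
    rw [div_le_div_iff₀ (by positivity) (by positivity)]
    push_cast at hs' ⊢
    nlinarith
  have hzero : Tendsto (fun n : ℕ => 2 / ((n.sqrt : ℝ) + 1)) atTop (𝓝 0) :=
    tendsto_const_nhds.div_atTop
      (tendsto_atTop_add_const_right _ 1 (tendsto_natCast_atTop_atTop.comp hsqrt))
  have hsub := squeeze_zero_norm (fun n => (Real.norm_eq_abs _).trans_le (hclose n)) hzero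
  simpa using hsub.add (h.comp hsqrt)

lemma cesaroLimit_comp_swap (u : ℕ → ℝ) (a b : ℕ) :
    cesaroLimit (u ∘ Equiv.swap a b) = cesaroLimit u := by
  have h : cesaroMean (u ∘ Equiv.swap a b) =ᶠ[atTop] cesaroMean u :=
    (eventually_ge_atTop (max a b)).mono fun n hn =>
      cesaroMean_comp_swap (le_of_max_le_left hn) (le_of_max_le_right hn)
  rw [cesaroLimit, cesaroLimit, limUnder, limUnder, Filter.map_congr h]

lemma one_div_factorial_mul_sum_perm_eq_cesaroMean (n : ℕ) :
    (1 / ((n + 1).factorial : ℝ)) * ∑ g : Equiv.Perm (Fin (n + 1)), u (g⁻¹ 0).val =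
      cesaroMean u n := by
  have hsum : ∑ g : Equiv.Perm (Fin (n + 1)), u (g⁻¹ 0).val
      = n.factorial * ∑ c ∈ range (n + 1), u c := by
    rw [← Equiv.sum_comp (Equiv.inv _), ← Equiv.sum_comp Equiv.Perm.decomposeFin.symm,
      Fintype.sum_prod_type]
    simp only [Equiv.inv_apply, inv_inv, Equiv.Perm.decomposeFin_symm_apply_zero,
      sum_const, card_univ, Fintype.card_perm, Fintype.card_fin, nsmul_eq_mul]
    rw [← mul_sum, Fin.sum_univ_eq_sum_range (fun c => u c)]
  rw [hsum, cesaroMean, Nat.factorial_succ]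
  push_cast
  field_simp

end CesaroMean

lemma norm_le_one_of_mem_unitInterval {x : ℝ} (hx : x ∈ unitInterval) : ‖x‖ ≤ 1 :=
  abs_le.2 ⟨by linarith [hx.1], hx.2⟩

lemma sub_sq_mem_unitInterval {x y : ℝ} (hx : x ∈ unitInterval) (hy : y ∈ unitInterval) :
    (x - y) ^ 2 ∈ unitInterval :=
  ⟨sq_nonneg _, by nlinarith [hx.1, hx.2, hy.1, hy.2]⟩

section Convergence

variable {Ω : Type*} [MeasurableSpace Ω] {μ : Measure Ω} {f : ℕ → Ω → ℝ}

lemma integrable_of_mem_unitInterval [IsFiniteMeasure μ] {g : Ω → ℝ}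
    (hg : AEStronglyMeasurable g μ) (h : ∀ᵐ ω ∂μ, g ω ∈ unitInterval) : Integrable g μ :=
  .of_bound hg 1 (h.mono fun _ => norm_le_one_of_mem_unitInterval)

lemma ae_summable_of_summable_integral {h : ℕ → Ω → ℝ} (h_nonneg : ∀ n ω, 0 ≤ h n ω)
    (hint : ∀ n, Integrable (h n) μ) (hsum : Summable fun n => ∫ ω, h n ω ∂μ) :
    ∀ᵐ ω ∂μ, Summable fun n => h n ω := by
  have hmeas : ∀ n, AEMeasurable (fun ω => ENNReal.ofReal (h n ω)) μ :=
    fun n => (hint n).aemeasurable.ennreal_ofReal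
  have hfin : ∫⁻ ω, ∑' n, ENNReal.ofReal (h n ω) ∂μ ≠ ⊤ := by
    rw [lintegral_tsum hmeas]
    simp_rw [← ofReal_integral_eq_lintegral_ofReal (hint _) (ae_of_all _ (h_nonneg _))]
    rw [← ENNReal.ofReal_tsum_of_nonneg (fun n => integral_nonneg (h_nonneg n)) hsum]
    exact ENNReal.ofReal_ne_top
  filter_upwards [ae_lt_top' (AEMeasurable.tsum hmeas) hfin] with ω hω
  simpa [ENNReal.toReal_ofReal (h_nonneg _ ω)] using ENNReal.summable_toReal hω.ne

lemma ae_cauchySeq_of_integral_sq_sub_le {X : ℕ → Ω → ℝ}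
    (hint : ∀ j, Integrable (fun ω => (X j ω - X (j + 1) ω) ^ 2) μ)
    (hX : ∀ j, ∫ ω, (X j ω - X (j + 1) ω) ^ 2 ∂μ ≤ (4⁻¹ : ℝ) ^ j) :
    ∀ᵐ ω ∂μ, CauchySeq fun j => X j ω := by
  -- weighting the squared increments by `2 ^ j` keeps them summable and dominates `|increment|`
  have hsum := ae_summable_of_summable_integral (μ := μ)
    (h := fun j ω => 2 ^ j * (X j ω - X (j + 1) ω) ^ 2) (fun j ω => by positivity)
    (fun j => (hint j).const_mul _) <| by
      refine summable_geometric_two.of_nonneg_of_le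
        (fun j => integral_nonneg fun ω => by positivity) fun j => ?_
      rw [integral_const_mul]
      calc (2 : ℝ) ^ j * ∫ ω, (X j ω - X (j + 1) ω) ^ 2 ∂μ ≤ 2 ^ j * (4⁻¹) ^ j := by
            gcongr; exact hX j
        _ = (1 / 2) ^ j := by rw [← mul_pow]; norm_num
  filter_upwards [hsum] with ω hω
  refine cauchySeq_of_summable_dist ((summable_geometric_two.add hω).of_nonneg_of_le
    (fun j => dist_nonneg) fun j => ?_)
  set t : ℝ := 2 ^ j with ht_def
  set d := X j ω - X (j + 1) ω
  have ht : 0 < t := by positivity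
  have hamgm : t * |d| ≤ 1 + t ^ 2 * d ^ 2 := by
    nlinarith [sq_nonneg (t * |d| - 1), sq_abs d]
  calc dist (X j ω) (X (j + 1) ω) = t⁻¹ * (t * |d|) := by
        rw [Real.dist_eq, inv_mul_cancel_left₀ ht.ne']
    _ ≤ t⁻¹ * (1 + t ^ 2 * d ^ 2) := by gcongr
    _ = (1 / 2) ^ j + t * d ^ 2 := by rw [ht_def, one_div, inv_pow]; field_simp

lemma measurable_cesaroMean (hf : ∀ c, Measurable (f c)) (n : ℕ) :
    Measurable fun ω => cesaroMean (f · ω) n :=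
  (Finset.measurable_sum _ fun c _ => hf c).const_mul _

lemma integrable_sq_cesaroMean_sub [IsFiniteMeasure μ] (hf : ∀ c, Measurable (f c))
    (hf01 : ∀ c ω, f c ω ∈ unitInterval) {g : Ω → ℝ} (hg : AEStronglyMeasurable g μ)
    (hg01 : ∀ᵐ ω ∂μ, g ω ∈ unitInterval) (N : ℕ) :
    Integrable (fun ω => (cesaroMean (f · ω) N - g ω) ^ 2) μ :=
  integrable_of_mem_unitInterval
    (((measurable_cesaroMean hf N).aestronglyMeasurable.sub hg).pow 2)
    (hg01.mono fun ω hω => sub_sq_mem_unitInterval (cesaroMean_mem_unitInterval (hf01 · ω) N) hω)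

lemma integral_cesaroMean_mul_cesaroMean [IsFiniteMeasure μ] (hf : ∀ c, Measurable (f c))
    (hf01 : ∀ c ω, f c ω ∈ unitInterval) {v a : ℝ}
    (hmom : ∀ c d, ∫ ω, f c ω * f d ω ∂μ = if c = d then v else a) {N M : ℕ} (h : N ≤ M) :
    ∫ ω, cesaroMean (f · ω) N * cesaroMean (f · ω) M ∂μ = a + (v - a) / (M + 1) := by
  have hint : ∀ c d, Integrable (fun ω => f c ω * f d ω) μ := fun c d =>
    integrable_of_mem_unitInterval ((hf c).mul (hf d)).aestronglyMeasurable
      (ae_of_all _ fun ω => unitInterval.mul_mem (hf01 c ω) (hf01 d ω))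
  have hrow : ∀ c ∈ range (N + 1),
      ∑ d ∈ range (M + 1), (if c = d then v else a) = (M + 1) * a + (v - a) := by
    intro c hc
    have hcM : c ∈ range (M + 1) := mem_range.2 ((mem_range.1 hc).trans_le (by omega))
    simp_rw [show ∀ d, (if c = d then v else a) = a + if c = d then v - a else 0 from
      fun d => by split_ifs <;> ring]
    rw [sum_add_distrib, sum_ite_eq, if_pos hcM, sum_const, card_range, nsmul_eq_mul]
    push_cast; ring
  simp_rw [cesaroMean, mul_mul_mul_comm, sum_mul_sum]
  rw [integral_const_mul,
    integral_finsetSum _ fun c _ => integrable_finsetSum _ fun d _ => hint c d]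
  simp_rw [integral_finsetSum _ fun d _ => hint _ d, hmom]
  rw [sum_congr rfl hrow, sum_const, card_range, nsmul_eq_mul]
  push_cast
  field_simp

lemma integral_sq_cesaroMean_sub_le [IsProbabilityMeasure μ] (hf : ∀ c, Measurable (f c))
    (hf01 : ∀ c ω, f c ω ∈ unitInterval) {v a : ℝ}
    (hmom : ∀ c d, ∫ ω, f c ω * f d ω ∂μ = if c = d then v else a) {N M : ℕ} (h : N ≤ M) :
    ∫ ω, (cesaroMean (f · ω) N - cesaroMean (f · ω) M) ^ 2 ∂μ ≤ ((N : ℝ) + 1)⁻¹ := by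
  have hint : ∀ n m, Integrable (fun ω => cesaroMean (f · ω) n * cesaroMean (f · ω) m) μ :=
    fun n m => integrable_of_mem_unitInterval
      ((measurable_cesaroMean hf n).mul (measurable_cesaroMean hf m)).aestronglyMeasurable
      (ae_of_all _ fun ω => unitInterval.mul_mem (cesaroMean_mem_unitInterval (hf01 · ω) n)
        (cesaroMean_mem_unitInterval (hf01 · ω) m))
  have hv : v ≤ 1 := by
    have h00 := hmom 0 0
    rw [if_pos rfl] at h00
    calc v = ∫ ω, f 0 ω * f 0 ω ∂μ := h00.symm
      _ ≤ ∫ _, 1 ∂μ := integral_mono_of_nonneg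
          (ae_of_all _ fun ω => (unitInterval.mul_mem (hf01 0 ω) (hf01 0 ω)).1)
          (integrable_const 1)
          (ae_of_all _ fun ω => (unitInterval.mul_mem (hf01 0 ω) (hf01 0 ω)).2)
      _ = 1 := by simp
  have ha : 0 ≤ a := by
    have h01 := hmom 0 1
    rw [if_neg zero_ne_one] at h01
    exact h01 ▸ integral_nonneg fun ω => mul_nonneg (hf01 0 ω).1 (hf01 1 ω).1
  have hexp : ∀ ω, (cesaroMean (f · ω) N - cesaroMean (f · ω) M) ^ 2
      = cesaroMean (f · ω) N * cesaroMean (f · ω) N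
        - 2 * (cesaroMean (f · ω) N * cesaroMean (f · ω) M)
        + cesaroMean (f · ω) M * cesaroMean (f · ω) M := fun ω => by ring
  simp_rw [hexp]
  rw [integral_add ((hint N N).sub' ((hint N M).const_mul 2)) (hint M M),
    integral_sub (hint N N) ((hint N M).const_mul 2), integral_const_mul,
    integral_cesaroMean_mul_cesaroMean hf hf01 hmom le_rfl,
    integral_cesaroMean_mul_cesaroMean hf hf01 hmom h,
    integral_cesaroMean_mul_cesaroMean hf hf01 hmom le_rfl]
  have hNM : ((M : ℝ) + 1)⁻¹ ≤ ((N : ℝ) + 1)⁻¹ := by gcongr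
  simp only [div_eq_mul_inv]
  nlinarith [mul_nonneg (by linarith : 0 ≤ 1 - (v - a)) (sub_nonneg.2 hNM),
    inv_nonneg.2 (by positivity : (0 : ℝ) ≤ M + 1)]

variable [IsFiniteMeasure μ] (hf : ∀ c, Measurable (f c)) (hf01 : ∀ c ω, f c ω ∈ unitInterval)
  (hvar : ∀ N M, N ≤ M →
    ∫ ω, (cesaroMean (f · ω) N - cesaroMean (f · ω) M) ^ 2 ∂μ ≤ ((N : ℝ) + 1)⁻¹)
include hf hf01 hvar

lemma integral_sq_cesaroMean_sub_le_of_tendsto {n : ℕ → ℕ} (hn : Tendsto n atTop atTop)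
    {g : Ω → ℝ} (hg : ∀ᵐ ω ∂μ, Tendsto (fun j => cesaroMean (f · ω) (n j)) atTop (𝓝 (g ω)))
    (N : ℕ) : ∫ ω, (cesaroMean (f · ω) N - g ω) ^ 2 ∂μ ≤ ((N : ℝ) + 1)⁻¹ := by
  have hlim : Tendsto (fun j => ∫ ω, (cesaroMean (f · ω) N - cesaroMean (f · ω) (n j)) ^ 2 ∂μ)
      atTop (𝓝 (∫ ω, (cesaroMean (f · ω) N - g ω) ^ 2 ∂μ)) :=
    tendsto_integral_filter_of_dominated_convergence (fun _ => 1)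
      (Eventually.of_forall fun j => (((measurable_cesaroMean hf N).sub
        (measurable_cesaroMean hf (n j))).pow_const 2).aestronglyMeasurable)
      (Eventually.of_forall fun j => ae_of_all _ fun ω => by
        rw [Real.norm_of_nonneg (sq_nonneg _)]
        exact (sub_sq_mem_unitInterval (cesaroMean_mem_unitInterval (hf01 · ω) N)
          (cesaroMean_mem_unitInterval (hf01 · ω) (n j))).2)
      (integrable_const 1) (hg.mono fun ω hω => (tendsto_const_nhds.sub hω).pow 2)
  exact le_of_tendsto hlim ((hn.eventually_ge_atTop N).mono fun j hj => hvar N (n j) hj)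

lemma ae_tendsto_cesaroMean_sq_of_tendsto {n : ℕ → ℕ} (hn : Tendsto n atTop atTop)
    {g : Ω → ℝ} (hg : ∀ᵐ ω ∂μ, Tendsto (fun j => cesaroMean (f · ω) (n j)) atTop (𝓝 (g ω))) :
    ∀ᵐ ω ∂μ, Tendsto (fun K => cesaroMean (f · ω) (K ^ 2)) atTop (𝓝 (g ω)) := by
  have hgm : AEStronglyMeasurable g μ := aestronglyMeasurable_of_tendsto_ae atTop
    (fun j => (measurable_cesaroMean hf (n j)).aestronglyMeasurable) hg
  have hg01 : ∀ᵐ ω ∂μ, g ω ∈ unitInterval := hg.mono fun ω hω =>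
    isClosed_Icc.mem_of_tendsto hω
      (Eventually.of_forall fun j => cesaroMean_mem_unitInterval (hf01 · ω) _)
  have hp : Summable fun K : ℕ => (((K ^ 2 : ℕ) : ℝ) + 1)⁻¹ :=
    (Real.summable_nat_pow_inv.2 one_lt_two).of_norm_bounded_eventually_nat <|
      (eventually_gt_atTop 0).mono fun K hK => by
        rw [Real.norm_of_nonneg (by positivity)]
        push_cast
        gcongr
        simp
  have hsum := ae_summable_of_summable_integral (μ := μ)
    (h := fun K ω => (cesaroMean (f · ω) (K ^ 2) - g ω) ^ 2) (fun K ω => sq_nonneg _)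
    (integrable_sq_cesaroMean_sub hf hf01 hgm hg01 <| · ^ 2)
    (hp.of_nonneg_of_le (fun K => integral_nonneg fun ω => sq_nonneg _)
      (integral_sq_cesaroMean_sub_le_of_tendsto hf hf01 hvar hn hg <| · ^ 2))
  filter_upwards [hsum] with ω hω
  have habs : Tendsto (fun K => |cesaroMean (f · ω) (K ^ 2) - g ω|) atTop (𝓝 0) := by
    simpa [Function.comp_def, Real.sqrt_sq_eq_abs] using
      (Real.continuous_sqrt.tendsto 0).comp hω.tendsto_atTop_zero
  simpa using ((tendsto_zero_iff_abs_tendsto_zero _).2 habs).add_const (g ω)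

lemma ae_exists_tendsto_cesaroMean :
    ∀ᵐ ω ∂μ, ∃ l, Tendsto (cesaroMean (f · ω)) atTop (𝓝 l) := by
  -- along `4 ^ j` the increments are small enough in `L²` to be summable almost surely
  have hcauchy : ∀ᵐ ω ∂μ, CauchySeq fun j => cesaroMean (f · ω) (4 ^ j) :=
    ae_cauchySeq_of_integral_sq_sub_le
      (fun j => integrable_sq_cesaroMean_sub hf hf01
        (measurable_cesaroMean hf _).aestronglyMeasurable
        (ae_of_all _ fun ω => cesaroMean_mem_unitInterval (hf01 · ω) _) _)
      fun j => (hvar _ _ (Nat.pow_le_pow_right (by norm_num) j.le_succ)).trans <| by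
        rw [inv_pow]; gcongr; push_cast; linarith
  have hg : ∀ᵐ ω ∂μ, Tendsto (fun j => cesaroMean (f · ω) (4 ^ j)) atTop
      (𝓝 (limUnder atTop fun j => cesaroMean (f · ω) (4 ^ j))) :=
    hcauchy.mono fun ω hω => hω.tendsto_limUnder
  filter_upwards [ae_tendsto_cesaroMean_sq_of_tendsto hf hf01 hvar
    (tendsto_pow_atTop_atTop_of_one_lt (by norm_num)) hg] with ω hω
  exact ⟨_, tendsto_cesaroMean_of_tendsto_sq (hf01 · ω) hω⟩

end Convergence

lemma Equiv.Perm.exists_apply_eq_apply_eq {α : Type*} [DecidableEq α] {a b c d : α}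
    (hab : a ≠ b) (hcd : c ≠ d) : ∃ τ : Equiv.Perm α, τ a = c ∧ τ b = d := by
  refine ⟨Equiv.swap a c * Equiv.swap b (Equiv.swap a c d), ?_, ?_⟩
  · have hd : Equiv.swap a c d ≠ a := by
      rw [Ne, Equiv.swap_apply_eq_iff, Equiv.swap_apply_left]; exact hcd.symm
    rw [Equiv.Perm.mul_apply, Equiv.swap_apply_of_ne_of_ne hab hd.symm, Equiv.swap_apply_left]
  · rw [Equiv.Perm.mul_apply, Equiv.swap_apply_left, Equiv.swap_apply_self]

section Exchangeable

variable {E : Type*} [MeasurableSpace E]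

def IsExchangeable (μ : Measure (ℕ → E)) : Prop :=
  ∀ τ : Equiv.Perm ℕ, μ.map (fun x => x ∘ τ) = μ

-- Only transpositions: the Cesàro limit is invariant under finitary permutations, not under all
-- permutations of `ℕ`.
variable (E) in
abbrev exchangeableSigmaAlgebra : MeasurableSpace (ℕ → E) :=
  ⨅ (a : ℕ) (b : ℕ), MeasurableSpace.invariants fun x : ℕ → E => x ∘ Equiv.swap a b

lemma measurableSet_exchangeableSigmaAlgebra {s : Set (ℕ → E)} :
    MeasurableSet[exchangeableSigmaAlgebra E] s ↔
      MeasurableSet s ∧ ∀ a b, (fun x : ℕ → E => x ∘ Equiv.swap a b) ⁻¹' s = s := by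
  rw [exchangeableSigmaAlgebra, MeasurableSpace.measurableSet_iInf]
  simp_rw [MeasurableSpace.measurableSet_iInf, MeasurableSpace.measurableSet_invariants]
  exact ⟨fun h => ⟨(h 0 0).1, fun a b => (h a b).2⟩, fun h a b => ⟨h.1, h.2 a b⟩⟩

lemma exchangeableSigmaAlgebra_le : exchangeableSigmaAlgebra E ≤ MeasurableSpace.pi :=
  fun _ hs => (measurableSet_exchangeableSigmaAlgebra.1 hs).1

lemma measurable_comp_perm (τ : Equiv.Perm ℕ) : Measurable fun x : ℕ → E => x ∘ τ :=
  measurable_pi_lambda _ fun _ => measurable_pi_apply _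

lemma measurable_cesaroMean_comp {φ : E → ℝ} (hφ : Measurable φ) (n : ℕ) :
    Measurable fun x : ℕ → E => cesaroMean (φ ∘ x) n :=
  measurable_cesaroMean (fun c => hφ.comp (measurable_pi_apply c)) n

lemma measurable_exchangeableSigmaAlgebra_cesaroLimit {φ : E → ℝ} (hφ : Measurable φ) :
    Measurable[exchangeableSigmaAlgebra E] fun x : ℕ → E => cesaroLimit (φ ∘ x) := by
  have hm : Measurable fun x : ℕ → E => cesaroLimit (φ ∘ x) :=
    (StronglyMeasurable.limUnder fun n =>
      (measurable_cesaroMean_comp hφ n).stronglyMeasurable).measurable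
  intro t ht
  refine measurableSet_exchangeableSigmaAlgebra.2 ⟨hm ht, fun a b => ?_⟩
  ext x
  simp only [Set.mem_preimage]
  rw [← Function.comp_assoc, cesaroLimit_comp_swap]

namespace IsExchangeable

variable {μ : Measure (ℕ → E)} (hμ : IsExchangeable μ)
include hμ

lemma setIntegral_comp_perm (τ : Equiv.Perm ℕ) {s : Set (ℕ → E)} (hs : MeasurableSet s)
    (hτs : (fun x : ℕ → E => x ∘ τ) ⁻¹' s = s) {F : (ℕ → E) → ℝ}
    (hF : AEStronglyMeasurable F μ) :
    ∫ x in s, F (x ∘ τ) ∂μ = ∫ x in s, F x ∂μ := by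
  conv_rhs => rw [← hμ τ]
  rw [setIntegral_map hs (by rwa [hμ τ]) (measurable_comp_perm τ).aemeasurable, hτs]

lemma integral_mul_apply {φ : E → ℝ} (hφ : Measurable φ) (c d : ℕ) :
    ∫ x, φ (x c) * φ (x d) ∂μ =
      if c = d then ∫ x, φ (x 0) * φ (x 0) ∂μ else ∫ x, φ (x 0) * φ (x 1) ∂μ := by
  have hF : ∀ i j, AEStronglyMeasurable (fun x : ℕ → E => φ (x i) * φ (x j)) μ := fun i j =>
    ((hφ.comp (measurable_pi_apply i)).mul (hφ.comp (measurable_pi_apply j))).aestronglyMeasurable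
  split_ifs with hcd
  · subst hcd
    simpa [setIntegral_univ] using hμ.setIntegral_comp_perm (Equiv.swap 0 c) MeasurableSet.univ
      rfl (hF 0 0)
  · obtain ⟨τ, h0, h1⟩ := Equiv.Perm.exists_apply_eq_apply_eq zero_ne_one hcd
    simpa [setIntegral_univ, h0, h1] using
      hμ.setIntegral_comp_perm τ MeasurableSet.univ rfl (hF 0 1)

lemma setIntegral_cesaroMean [IsFiniteMeasure μ] {φ : E → ℝ} (hφ : Measurable φ)
    (hφ01 : ∀ y, φ y ∈ unitInterval) {s : Set (ℕ → E)}
    (hs : MeasurableSet[exchangeableSigmaAlgebra E] s) (n : ℕ) :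
    ∫ x in s, cesaroMean (φ ∘ x) n ∂μ = ∫ x in s, φ (x 0) ∂μ := by
  obtain ⟨hs, hswap⟩ := measurableSet_exchangeableSigmaAlgebra.1 hs
  have hcol : ∀ c, ∫ x in s, φ (x c) ∂μ = ∫ x in s, φ (x 0) ∂μ := fun c => by
    simpa using hμ.setIntegral_comp_perm (Equiv.swap 0 c) hs (hswap 0 c)
      (hφ.comp (measurable_pi_apply 0)).aestronglyMeasurable
  have hint : ∀ c, Integrable (fun x : ℕ → E => φ (x c)) (μ.restrict s) := fun c =>
    integrable_of_mem_unitInterval (hφ.comp (measurable_pi_apply c)).aestronglyMeasurable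
      (ae_of_all _ fun x => hφ01 _)
  simp only [cesaroMean, Function.comp_apply]
  rw [integral_const_mul, integral_finsetSum _ fun c _ => hint c]
  simp only [hcol, sum_const, card_range, nsmul_eq_mul]
  push_cast
  field_simp

lemma ae_tendsto_cesaroLimit [IsProbabilityMeasure μ] {φ : E → ℝ} (hφ : Measurable φ)
    (hφ01 : ∀ y, φ y ∈ unitInterval) :
    ∀ᵐ x ∂μ, Tendsto (cesaroMean (φ ∘ x)) atTop (𝓝 (cesaroLimit (φ ∘ x))) := by
  have hf : ∀ c, Measurable fun x : ℕ → E => φ (x c) := fun c => hφ.comp (measurable_pi_apply c)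
  have hf01 : ∀ c (x : ℕ → E), φ (x c) ∈ unitInterval := fun c x => hφ01 (x c)
  filter_upwards [ae_exists_tendsto_cesaroMean hf hf01
    fun _ _ => integral_sq_cesaroMean_sub_le hf hf01 (hμ.integral_mul_apply hφ)] with x hx
  exact tendsto_nhds_limUnder hx

lemma cesaroLimit_ae_eq_condExp [IsProbabilityMeasure μ] {φ : E → ℝ} (hφ : Measurable φ)
    (hφ01 : ∀ y, φ y ∈ unitInterval) :
    (fun x => cesaroLimit (φ ∘ x)) =ᵐ[μ] μ[fun x => φ (x 0) | exchangeableSigmaAlgebra E] := by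
  have hlim := hμ.ae_tendsto_cesaroLimit hφ hφ01
  have hm := measurable_exchangeableSigmaAlgebra_cesaroLimit hφ
  refine ae_eq_condExp_of_forall_setIntegral_eq exchangeableSigmaAlgebra_le
    (integrable_of_mem_unitInterval (hφ.comp (measurable_pi_apply 0)).aestronglyMeasurable
      (ae_of_all _ fun x => hφ01 _)) (fun s _ _ => ?_) (fun s hs _ => ?_)
    ⟨_, hm.stronglyMeasurable, .rfl⟩
  · refine (integrable_of_mem_unitInterval
      (hm.mono exchangeableSigmaAlgebra_le le_rfl).aestronglyMeasurable ?_).integrableOn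
    exact hlim.mono fun x hx => isClosed_Icc.mem_of_tendsto hx
      (Eventually.of_forall fun n => cesaroMean_mem_unitInterval (fun c => hφ01 (x c)) n)
  · have hconv : Tendsto (fun n => ∫ x in s, cesaroMean (φ ∘ x) n ∂μ) atTop
        (𝓝 (∫ x in s, cesaroLimit (φ ∘ x) ∂μ)) :=
      tendsto_integral_of_dominated_convergence (fun _ => 1)
        (fun n => (measurable_cesaroMean_comp hφ n).aestronglyMeasurable)
        (integrable_const 1)
        (fun n => ae_of_all _ fun x => norm_le_one_of_mem_unitInterval
          (cesaroMean_mem_unitInterval (fun c => hφ01 (x c)) n))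
        (ae_restrict_of_ae hlim)
    simp_rw [hμ.setIntegral_cesaroMean hφ hφ01 hs] at hconv
    exact tendsto_nhds_unique hconv tendsto_const_nhds

theorem ae_exists_tendsto_cesaroMean_indicator [StandardBorelSpace E]
    [IsProbabilityMeasure μ] {ι : Type*} [Countable ι] {B : ι → Set E}
    (hB : ∀ i, MeasurableSet (B i)) :
    ∀ᵐ x ∂μ, ∃ m : Measure E, IsProbabilityMeasure m ∧
      ∀ i, Tendsto (cesaroMean ((B i).indicator 1 ∘ x)) atTop (𝓝 (m (B i)).toReal) := by
  set κ := condExpKernel μ (exchangeableSigmaAlgebra E)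
  have hcyl : ∀ i, ∀ᵐ x ∂μ, Tendsto (cesaroMean ((B i).indicator 1 ∘ x)) atTop
      (𝓝 (κ x ((fun y => y 0) ⁻¹' B i)).toReal) := by
    intro i
    have hφ : Measurable ((B i).indicator (1 : E → ℝ)) := measurable_one.indicator (hB i)
    have hφ01 : ∀ y, (B i).indicator (1 : E → ℝ) y ∈ unitInterval := fun y => by
      by_cases hy : y ∈ B i <;> simp [hy]
    filter_upwards [hμ.ae_tendsto_cesaroLimit hφ hφ01, hμ.cesaroLimit_ae_eq_condExp hφ hφ01,
      condExpKernel_ae_eq_condExp exchangeableSigmaAlgebra_le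
        (measurable_pi_apply 0 (hB i))] with x hx hcond hκ
    have hind : ((fun y : ℕ → E => y 0) ⁻¹' B i).indicator (fun _ => (1 : ℝ)) =
        fun y => (B i).indicator 1 (y 0) := rfl
    rwa [← measureReal_def, hκ, hind, ← hcond]
  filter_upwards [ae_all_iff.2 hcyl] with x hx
  refine ⟨(κ x).map (fun y => y 0),
    Measure.isProbabilityMeasure_map (measurable_pi_apply 0).aemeasurable, fun i => ?_⟩
  rw [Measure.map_apply (measurable_pi_apply 0) (hB i)]
  exact hx i

end IsExchangeable

end Exchangeable

theorem empirical_column_distribution_exists_general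
    {A : Type*} [MeasurableSpace A] [StandardBorelSpace A]
    (D : Measure (ℕ × ℕ → A)) [IsProbabilityMeasure D]
    (hinv : ∀ σ τ : Equiv.Perm ℕ,
      Measure.map (fun R : ℕ × ℕ → A => fun ij : ℕ × ℕ => R (σ⁻¹ ij.1, τ⁻¹ ij.2)) D = D)
    (𝒞 : ℕ → Σ k : ℕ, Set (Fin k → A))
    (hmeas : ∀ m, MeasurableSet (𝒞 m).2) :
    ∀ᵐ R ∂D, ∃ m : Measure (ℕ → A), IsProbabilityMeasure m ∧
      ∀ idx : ℕ,
        Tendsto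
          (fun n : ℕ =>
            (1 / (Nat.factorial (n + 1) : ℝ)) *
              ∑ g : Equiv.Perm (Fin (n + 1)),
                (if (fun j : Fin (𝒞 idx).1 => R (j.val, (g⁻¹ 0).val)) ∈ (𝒞 idx).2
                  then (1 : ℝ) else 0))
          atTop
          (nhds ((m {v : ℕ → A | (fun j : Fin (𝒞 idx).1 => v j.val) ∈ (𝒞 idx).2}).toReal)) := by
  set col : (ℕ × ℕ → A) → ℕ → ℕ → A := fun R c i => R (i, c)
  have hcol : Measurable col := by fun_prop
  have hexch : IsExchangeable (D.map col) := fun τ => by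
    rw [Measure.map_map (measurable_comp_perm τ) hcol]
    conv_rhs => rw [← hinv 1 τ⁻¹, Measure.map_map hcol (by fun_prop)]
    simp only [inv_inv]
    rfl
  have : IsProbabilityMeasure (D.map col) := Measure.isProbabilityMeasure_map hcol.aemeasurable
  have hB : ∀ idx, MeasurableSet {v : ℕ → A | (fun j : Fin (𝒞 idx).1 => v j) ∈ (𝒞 idx).2} :=
    fun idx => (measurable_pi_lambda _ fun j => measurable_pi_apply _) (hmeas idx)
  filter_upwards [ae_of_ae_map hcol.aemeasurable
    (hexch.ae_exists_tendsto_cesaroMean_indicator hB)] with R ⟨m, hm, hlim⟩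
  refine ⟨m, hm, fun idx => ?_⟩
  convert hlim idx using 2 with n
  exact one_div_factorial_mul_sum_perm_eq_cesaroMean
    (u := fun c => if (fun j : Fin (𝒞 idx).1 => R (j.val, c)) ∈ (𝒞 idx).2 then 1 else 0) n

/-- For a measure `D` on `M_∞(A) = A^{ℕ×ℕ}` invariant and ergodic
under row and column permutations, for `D`-a.e. matrix `R` the empirical distribution
of columns exists: for every cylinder set from a fixed countable generating family, the
averages `(1/n!) Σ_{g ∈ S_n} χ_B((r_{i,g⁻¹(1)})_i)` converge, and the limits are the
cylinder values of a Borel probability measure `m_R` on `A^ℕ`. -/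
theorem empirical_column_distribution_exists
    {A : Type*} [MeasurableSpace A] [StandardBorelSpace A]
    (D : Measure (ℕ × ℕ → A)) [IsProbabilityMeasure D]
    (hinv : ∀ σ τ : Equiv.Perm ℕ,
      Measure.map (fun R : ℕ × ℕ → A => fun ij : ℕ × ℕ => R (σ⁻¹ ij.1, τ⁻¹ ij.2)) D = D)
    (herg : ∀ S : Set (ℕ × ℕ → A), MeasurableSet S →
      (∀ σ τ : Equiv.Perm ℕ,
        D (((fun R : ℕ × ℕ → A => fun ij : ℕ × ℕ => R (σ⁻¹ ij.1, τ⁻¹ ij.2)) ⁻¹' S) ∆ S)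
          = 0) →
      D S = 0 ∨ D S = 1)
    (𝒞 : ℕ → Σ k : ℕ, Set (Fin k → A))
    (hmeas : ∀ m, MeasurableSet (𝒞 m).2)
    (hgen : MeasurableSpace.generateFrom
        {C : Set (ℕ → A) | ∃ m, C = {v | (fun j : Fin (𝒞 m).1 => v j.val) ∈ (𝒞 m).2}}
      = (inferInstance : MeasurableSpace (ℕ → A))) :
    ∀ᵐ R ∂D, ∃ m : Measure (ℕ → A), IsProbabilityMeasure m ∧
      ∀ idx : ℕ,
        Tendsto
          (fun n : ℕ =>
            (1 / (Nat.factorial (n + 1) : ℝ)) *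
              ∑ g : Equiv.Perm (Fin (n + 1)),
                (if (fun j : Fin (𝒞 idx).1 => R (j.val, (g⁻¹ 0).val)) ∈ (𝒞 idx).2
                  then (1 : ℝ) else 0))
          atTop
          (nhds ((m {v : ℕ → A | (fun j : Fin (𝒞 idx).1 => v j.val) ∈ (𝒞 idx).2}).toReal)) :=
  empirical_column_distribution_exists_general D hinv 𝒞 hmeas
end
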